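/- Define F(b,c) = (b + c + 2√(bc))/3 if b ≤ 4c and F(b,c) = c + b/2 if b > 4c, on the region R = {(b,c) : (1-c)/2 ≥ b ≥ c > 1/2 - b}. Then F(b,c) ≤ 4/9 for all (b,c) in R, with equality exactly at (b,c) = (1/3, 1/3). -/
import Mathlib


noncomputable def F (p : ℝ × ℝ) : ℝ :=
  if p.1 ≤ 4 * p.2 then (p.1 + p.2 + 2 * Real.sqrt (p.1 * p.2)) / 3
  else p.2 + p.1 / 2

def R : Set (ℝ × ℝ) :=
  {p | p.1 ≤ (1 - p.2) / 2 ∧ p.2 ≤ p.1 ∧ 1 / 2 - p.1 < p.2}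

theorem F_le_four_ninths :
    ∀ p ∈ R, F p ≤ 4 / 9 ∧ (F p = 4 / 9 ↔ p = (1 / 3, 1 / 3)) := by
  rintro ⟨b, c⟩ ⟨h1, h2, h3⟩
  simp only at h1 h2 h3
  have hc : 0 < c := by linarith
  have hb : 0 < b := lt_of_lt_of_le hc h2
  have hsum : b + c ≤ 2 / 3 := by linarith
  unfold F
  simp only
  by_cases hcase : b ≤ 4 * c
  · rw [if_pos hcase]
    have hsq : Real.sqrt (b * c) ≤ (b + c) / 2 := by
      have h := Real.sqrt_le_sqrt (show b * c ≤ ((b + c) / 2) ^ 2 by nlinarith)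
      rwa [Real.sqrt_sq (by positivity)] at h
    constructor
    · linarith
    · constructor
      · intro h
        have hs2 : b + c = 2 / 3 := by linarith
        have hsv : Real.sqrt (b * c) = 1 / 3 := by linarith
        have hbc : b * c = 1 / 9 := by
          have := Real.sq_sqrt (by positivity : (0:ℝ) ≤ b * c)
          rw [hsv] at this; nlinarith
        have hbeq : b = 1 / 3 := by nlinarith
        have hceq : c = 1 / 3 := by linarith
        simp [hbeq, hceq]
      · intro h
        obtain ⟨hb1, hc1⟩ := Prod.mk.injEq .. ▸ h
        simp only [Prod.mk.injEq] at h
        rw [h.1, h.2]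
        rw [show (1/3 : ℝ) * (1/3) = (1/3)^2 by ring, Real.sqrt_sq (by norm_num)]
        norm_num
  · rw [if_neg hcase]
    push_neg at hcase
    have hc9 : c < 1 / 9 := by linarith
    constructor
    · linarith
    · constructor
      · intro h; linarith
      · intro h
        simp only [Prod.mk.injEq] at h
        exfalso; rw [h.1, h.2] at hcase; linarith
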